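/- In a goal-conditioned MDP with finite state space S, goal distribution p_g on S, step reward r(s, g) = 1{s = g}, and discount γ ∈ [0,1): for any policy π with discounted state-visitation-based marginal state distribution p_{I_π} in the data buffer, the value function satisfies V^π(s) ≤ (1 − D_TV(p_{I_π}, p_g)) / (1 − γ), where D_TV is the total variation distance. Equivalently, D_TV(p_{I_π}, p_g) ≤ 1 − (1−γ) V^π(s). -/

import Mathlib

open Finset

/-! The value is the overlap `∑ x, pI x * pg x` summed geometrically, i.e. divided by `1 - γ`.
For probability vectors each product `pI x * pg x` is at most `min (pI x) (pg x)`, and the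
total mass of the pointwise minimum is `1 - D_TV(pI, pg)` because
`2 * min a b = a + b - |a - b|`. -/

lemma mul_le_min_of_le_one {a b : ℝ} (ha₀ : 0 ≤ a) (hb₀ : 0 ≤ b) (ha₁ : a ≤ 1) (hb₁ : b ≤ 1) :
    a * b ≤ min a b :=
  le_min (mul_le_of_le_one_right ha₀ hb₁) (mul_le_of_le_one_left hb₀ ha₁)

lemma le_one_of_sum_eq_one {ι : Type*} [Fintype ι] {p : ι → ℝ} (hp₀ : ∀ x, 0 ≤ p x)
    (hp₁ : ∑ x, p x = 1) (x : ι) : p x ≤ 1 :=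
  hp₁ ▸ single_le_sum (fun y _ ↦ hp₀ y) (mem_univ x)

lemma two_mul_sum_min_eq {ι : Type*} (s : Finset ι) (p q : ι → ℝ) :
    2 * ∑ x ∈ s, min (p x) (q x) = ∑ x ∈ s, p x + ∑ x ∈ s, q x - ∑ x ∈ s, |p x - q x| := by
  rw [mul_sum, ← sum_add_distrib, ← sum_sub_distrib]
  refine sum_congr rfl fun x _ ↦ ?_
  rw [abs_sub_comm, ← two_nsmul_inf_eq_add_sub_abs_sub, two_nsmul, two_mul]

lemma sum_mul_le_one_sub_tv {ι : Type*} [Fintype ι] {p q : ι → ℝ}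
    (hp₀ : ∀ x, 0 ≤ p x) (hp₁ : ∑ x, p x = 1) (hq₀ : ∀ x, 0 ≤ q x) (hq₁ : ∑ x, q x = 1) :
    ∑ x, p x * q x ≤ 1 - (1/2) * ∑ x, |p x - q x| := by
  have hmin : ∑ x, p x * q x ≤ ∑ x, min (p x) (q x) :=
    sum_le_sum fun x _ ↦ mul_le_min_of_le_one (hp₀ x) (hq₀ x)
      (le_one_of_sum_eq_one hp₀ hp₁ x) (le_one_of_sum_eq_one hq₀ hq₁ x)
  have := two_mul_sum_min_eq univ p q
  rw [hp₁, hq₁] at this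
  linarith

lemma tsum_geometric_mul {γ : ℝ} (hγ₀ : 0 ≤ γ) (hγ₁ : γ < 1) (c : ℝ) :
    ∑' t : ℕ, γ ^ t * c = c / (1 - γ) := by
  rw [tsum_mul_right, tsum_geometric_of_lt_one hγ₀ hγ₁, inv_mul_eq_div]

/-- In a goal-conditioned MDP with finite state space, reward `1{s = g}`,
goal distribution `pg` and stationary marginal state distribution `pI` induced by the
policy, the value function `V = ∑_{t≥0} γ^t P(s_t = g)` (with `s_t ∼ pI`, `g ∼ pg`
independent) satisfies `V ≤ (1 − D_TV(pI, pg)) / (1 − γ)`; equivalently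
`D_TV(pI, pg) ≤ 1 − (1−γ) V`. -/
theorem value_bounds_tv_distance {X : Type*} [Fintype X]
    (γ : ℝ) (hγ0 : 0 ≤ γ) (hγ1 : γ < 1)
    (pI pg : X → ℝ)
    (hpI0 : ∀ x, 0 ≤ pI x) (hpI1 : ∑ x, pI x = 1)
    (hpg0 : ∀ x, 0 ≤ pg x) (hpg1 : ∑ x, pg x = 1)
    (V : ℝ) (hV : V = ∑' t : ℕ, γ ^ t * ∑ x, pI x * pg x) :
    V ≤ (1 - (1/2) * ∑ x, |pI x - pg x|) / (1 - γ) ∧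
      (1/2) * ∑ x, |pI x - pg x| ≤ 1 - (1 - γ) * V := by
  have hγ : 0 < 1 - γ := sub_pos.mpr hγ1
  have hoverlap := sum_mul_le_one_sub_tv hpI0 hpI1 hpg0 hpg1
  rw [tsum_geometric_mul hγ0 hγ1] at hV
  have hV' : (1 - γ) * V = ∑ x, pI x * pg x := by
    rw [hV, mul_div_cancel₀ _ hγ.ne']
  refine ⟨?_, by linarith⟩
  rw [hV]
  gcongr
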